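/- Let g = (z_1 z_2, z_1 z_3) ∈ ℂ[z_1, z_2, z_3]^2, viewed as a polynomial mapping ℂ^3 → ℂ^2. Then K_∞(g) ⊆ {(0,0)}; that is, (0,0) is the only possible asymptotic critical value of g. -/
import Mathlib


open MvPolynomial Filter

/-- Euclidean norm on `ℂ^m`. -/
noncomputable def eucNorm {m : ℕ} (v : Fin m → ℂ) : ℝ :=
  Real.sqrt (∑ k, ‖v k‖ ^ 2)

/-- The differential of `f_j` at `x` applied to `v`. -/
noncomputable def pdiff {n p : ℕ} (f : Fin p → MvPolynomial (Fin n) ℂ)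
    (x : Fin n → ℂ) (j : Fin p) (v : Fin n → ℂ) : ℂ :=
  ∑ k, MvPolynomial.eval x (MvPolynomial.pderiv k (f j)) * v k

/-- Operator norm of `w_j(x)`, the restriction of `df_j(x)` to the kernel of
`v ↦ (df_i(x) v)_{i ≠ j}`. -/
noncomputable def wNorm {n p : ℕ} (f : Fin p → MvPolynomial (Fin n) ℂ)
    (x : Fin n → ℂ) (j : Fin p) : ℝ :=
  sSup { r : ℝ | ∃ v : Fin n → ℂ,
    (∀ i : Fin p, i ≠ j → pdiff f x i v = 0) ∧ eucNorm v ≤ 1 ∧ r = ‖pdiff f x j v‖ }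

/-- The Kuo distance `κ(df(x)) = min_{1 ≤ j ≤ p} ‖w_j(x)‖`. -/
noncomputable def kuoDist {n p : ℕ} (f : Fin p → MvPolynomial (Fin n) ℂ)
    (x : Fin n → ℂ) : ℝ :=
  ⨅ j : Fin p, wNorm f x j

/-- The set of asymptotic critical values of the polynomial map `f : ℂ^n → ℂ^p`. -/
def Kinf {n p : ℕ} (f : Fin p → MvPolynomial (Fin n) ℂ) : Set (Fin p → ℂ) :=
  { c | ∃ x : ℕ → (Fin n → ℂ),
      Tendsto (fun t => eucNorm (x t)) atTop atTop ∧
      Tendsto (fun t j => MvPolynomial.eval (x t) (f j)) atTop (nhds c) ∧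
      Tendsto (fun t => eucNorm (x t) * kuoDist f (x t)) atTop (nhds 0) }


lemma norm_le_eucNorm {m : ℕ} (v : Fin m → ℂ) (k : Fin m) : ‖v k‖ ≤ eucNorm v := by
  have h : ‖v k‖ ^ 2 ≤ ∑ i, ‖v i‖ ^ 2 :=
    Finset.single_le_sum (f := fun i => ‖v i‖ ^ 2) (fun i _ => sq_nonneg _) (Finset.mem_univ k)
  calc ‖v k‖ = Real.sqrt (‖v k‖ ^ 2) := (Real.sqrt_sq (norm_nonneg _)).symm
    _ ≤ eucNorm v := Real.sqrt_le_sqrt h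

lemma eucNorm_nonneg {m : ℕ} (v : Fin m → ℂ) : 0 ≤ eucNorm v := Real.sqrt_nonneg _

lemma bddAbove_wSet {n p : ℕ} (f : Fin p → MvPolynomial (Fin n) ℂ)
    (x : Fin n → ℂ) (j : Fin p) :
    BddAbove { r : ℝ | ∃ v : Fin n → ℂ,
      (∀ i : Fin p, i ≠ j → pdiff f x i v = 0) ∧ eucNorm v ≤ 1 ∧ r = ‖pdiff f x j v‖ } := by
  refine ⟨∑ k, ‖MvPolynomial.eval x (MvPolynomial.pderiv k (f j))‖, ?_⟩
  rintro r ⟨v, -, hv, rfl⟩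
  calc ‖pdiff f x j v‖
      ≤ ∑ k, ‖MvPolynomial.eval x (MvPolynomial.pderiv k (f j)) * v k‖ := norm_sum_le _ _
    _ ≤ ∑ k, ‖MvPolynomial.eval x (MvPolynomial.pderiv k (f j))‖ := by
        refine Finset.sum_le_sum fun k _ => ?_
        rw [norm_mul]
        exact mul_le_of_le_one_right (norm_nonneg _) ((norm_le_eucNorm v k).trans hv)

lemma x0_le_wNorm (x : Fin 3 → ℂ) (j : Fin 2) :
    ‖x 0‖ ≤ wNorm (![X 0 * X 1, X 0 * X 2] : Fin 2 → MvPolynomial (Fin 3) ℂ) x j := by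
  refine le_csSup (bddAbove_wSet _ _ _) ?_
  fin_cases j
  · refine ⟨![0, 1, 0], ?_, ?_, ?_⟩
    · intro i hi
      fin_cases i
      · exact absurd rfl hi
      · simp [pdiff, Fin.sum_univ_three, pderiv_mul, pderiv_X]
    · simp [eucNorm, Fin.sum_univ_three]
    · simp [pdiff, Fin.sum_univ_three, pderiv_mul, pderiv_X]
  · refine ⟨![0, 0, 1], ?_, ?_, ?_⟩
    · intro i hi
      fin_cases i
      · simp [pdiff, Fin.sum_univ_three, pderiv_mul, pderiv_X]
      · exact absurd rfl hi
    · simp [eucNorm, Fin.sum_univ_three]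
    · simp [pdiff, Fin.sum_univ_three, pderiv_mul, pderiv_X]

lemma key_ineq (x : Fin 3 → ℂ) (j : Fin 2) :
    ‖MvPolynomial.eval x ((![X 0 * X 1, X 0 * X 2] : Fin 2 → MvPolynomial (Fin 3) ℂ) j)‖
      ≤ eucNorm x * kuoDist (![X 0 * X 1, X 0 * X 2] : Fin 2 → MvPolynomial (Fin 3) ℂ) x := by
  have hk : ‖x 0‖ ≤ kuoDist (![X 0 * X 1, X 0 * X 2] : Fin 2 → MvPolynomial (Fin 3) ℂ) x :=
    le_ciInf (x0_le_wNorm x)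
  fin_cases j
  · calc ‖MvPolynomial.eval x ((![X 0 * X 1, X 0 * X 2] : Fin 2 → MvPolynomial (Fin 3) ℂ) 0)‖
        = ‖x 1‖ * ‖x 0‖ := by simp [mul_comm]
      _ ≤ eucNorm x * kuoDist _ x :=
        mul_le_mul (norm_le_eucNorm x 1) hk (norm_nonneg _) (eucNorm_nonneg x)
  · calc ‖MvPolynomial.eval x ((![X 0 * X 1, X 0 * X 2] : Fin 2 → MvPolynomial (Fin 3) ℂ) 1)‖
        = ‖x 2‖ * ‖x 0‖ := by simp [mul_comm]
      _ ≤ eucNorm x * kuoDist _ x :=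
        mul_le_mul (norm_le_eucNorm x 2) hk (norm_nonneg _) (eucNorm_nonneg x)

/-- for `g = (z₁z₂, z₁z₃) : ℂ³ → ℂ²`, the set of asymptotic critical
values satisfies `K_∞(g) ⊆ {(0,0)}`. -/
theorem Kinf_pair_example_subset :
    Kinf (![X 0 * X 1, X 0 * X 2] : Fin 2 → MvPolynomial (Fin 3) ℂ) ⊆ {0} := by
  rintro c ⟨x, -, hc, hk⟩
  have hj0 : ∀ j : Fin 2, c j = 0 := by
    intro j
    have hj : Tendsto (fun t => MvPolynomial.eval (x t)
        ((![X 0 * X 1, X 0 * X 2] : Fin 2 → MvPolynomial (Fin 3) ℂ) j)) atTop (nhds (c j)) :=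
      (tendsto_pi_nhds.mp hc) j
    have h0 : Tendsto (fun t => MvPolynomial.eval (x t)
        ((![X 0 * X 1, X 0 * X 2] : Fin 2 → MvPolynomial (Fin 3) ℂ) j)) atTop (nhds 0) := by
      rw [tendsto_zero_iff_norm_tendsto_zero]
      exact squeeze_zero (fun t => norm_nonneg _) (fun t => key_ineq (x t) j) hk
    exact tendsto_nhds_unique hj h0
  exact Set.mem_singleton_iff.mpr (funext hj0)
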